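/- arXiv:1612.09397 — 2 statements merged into one kernel-verified Lean document; each statement's English description precedes it below -/
import Mathlib

section
/- Suppose m ≥ 6. Then every element x ∈ X is contained in exactly r_6 = (2^m − 4)(2^m − 8)(2^m − 16)(2^m − 32)/5! blocks of W_6, and the total number of blocks is |W_6| = (2^m − 2)(2^m − 4)(2^m − 8)(2^m − 16)(2^m − 32)/6!. -/
/-!
A finite set `A` in a ring of characteristic two whose nonempty subsets never sum to `0` or `1`
is a set with `A ∪ {1}` linearly independent over `𝔽₂` and `1 ∉ A`. The span of `A ∪ {1}` has
`2 ^ (#A + 1)` elements, and `insert a A` is again such a set exactly when `a` lies outside this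
span. Double counting the pairs `A ⊂ insert a A` among such sets containing a fixed `D` gives
`(j + 1 - #D) · g (j + 1) = (q - 2 ^ (j + 1)) · g j`, where `g j` counts those of size `j` and
`q = |F|`.

A block `B` of `W_k` is a minimal set with element sum `1`, so removing any point of `B` leaves
such a set of size `k - 1`; conversely every nonempty such `A` completes to the unique block
`insert (1 + ΣA) A`. Hence `(k - #D) · #{B ∈ W_k | D ⊆ B} = g (k - 1)`, and iterating from
`D = ∅` and `D = {x}` gives both formulas.
-/

open scoped Classical

noncomputable section

/-- `X = GF(2^m) \\ {0, 1}`. -/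
def designX (m : ℕ) : Set (GaloisField 2 m) := {x | x ≠ 0 ∧ x ≠ 1}

/-- `W_k`: the collection of all `k`-element subsets `B` of `X` whose element-sum is `1`
and such that no nonempty proper subset of `B` has element-sum `1`. -/
def designW (m k : ℕ) : Set (Finset (GaloisField 2 m)) :=
  {B | (B : Set (GaloisField 2 m)) ⊆ designX m ∧ B.card = k ∧ B.sum id = 1 ∧
    ∀ I ⊆ B, I.Nonempty → I ≠ B → I.sum id ≠ 1}

open Finset

section SubsetSums

variable {F : Type*} [CommRing F]

def AvoidsZeroOne (A : Finset F) : Prop :=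
  ∀ I ⊆ A, I.Nonempty → I.sum id ≠ 0 ∧ I.sum id ≠ 1

theorem AvoidsZeroOne.mono {A B : Finset F} (hB : AvoidsZeroOne B) (h : A ⊆ B) :
    AvoidsZeroOne A :=
  fun I hI => hB I (hI.trans h)

theorem avoidsZeroOne_empty : AvoidsZeroOne (∅ : Finset F) :=
  fun _ hI hne => absurd (subset_empty.1 hI) hne.ne_empty

theorem avoidsZeroOne_singleton {x : F} : AvoidsZeroOne {x} ↔ x ≠ 0 ∧ x ≠ 1 := by
  refine ⟨fun h => by simpa using h {x} subset_rfl (singleton_nonempty x),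
    fun hx I hI hne => ?_⟩
  rw [(subset_singleton_iff.1 hI).resolve_left hne.ne_empty, sum_singleton]
  exact hx

variable [CharP F 2]

theorem sum_add_sum_eq_sum_symmDiff (I J : Finset F) :
    I.sum id + J.sum id = (symmDiff I J).sum id := by
  rw [← sum_union_inter, symmDiff_eq_sup_sdiff_inf,
    ← sum_sdiff (inter_subset_union (s := I) (t := J)), add_assoc, CharTwo.add_self_eq_zero,
    add_zero]
  rfl

theorem sum_sdiff_eq_add {A I : Finset F} (h : I ⊆ A) :
    (A \ I).sum id = A.sum id + I.sum id := by
  rw [← sum_sdiff h, CharTwo.add_cancel_right]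

theorem AvoidsZeroOne.sum_injOn {A : Finset F} (hA : AvoidsZeroOne A) :
    Set.InjOn (fun I : Finset F => I.sum id) A.powerset := by
  intro I hI J hJ hIJ
  by_contra hne
  have hsub : symmDiff I J ⊆ A :=
    symmDiff_le_sup.trans (sup_le (mem_powerset.1 hI) (mem_powerset.1 hJ))
  refine (hA _ hsub (nonempty_iff_ne_empty.2 (symmDiff_eq_bot.not.2 hne))).1 ?_
  rw [← sum_add_sum_eq_sum_symmDiff]
  exact CharTwo.add_eq_zero.2 hIJ

theorem AvoidsZeroOne.sum_ne_one {A I : Finset F} (hA : AvoidsZeroOne A) (hI : I ⊆ A) :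
    I.sum id ≠ 1 := by
  rcases I.eq_empty_or_nonempty with rfl | hne
  · have := CharP.nontrivial_of_char_ne_one (R := F) (by norm_num : 2 ≠ 1)
    simp
  · exact (hA I hI hne).2

theorem AvoidsZeroOne.sum_ne_sum_add_one {A I J : Finset F} (hA : AvoidsZeroOne A)
    (hI : I ⊆ A) (hJ : J ⊆ A) : I.sum id ≠ J.sum id + 1 := by
  intro h
  refine hA.sum_ne_one (symmDiff_le_sup.trans (sup_le hI hJ)) ?_
  rw [← sum_add_sum_eq_sum_symmDiff, h, add_right_comm, CharTwo.add_self_eq_zero, zero_add]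

/-- The `𝔽₂`-span of `A ∪ {1}`. -/
def spanWithOne (A : Finset F) : Finset F :=
  A.powerset.image (fun I => I.sum id) ∪ A.powerset.image (fun I => I.sum id + 1)

theorem mem_spanWithOne {A : Finset F} {a : F} :
    a ∈ spanWithOne A ↔ ∃ I ⊆ A, I.sum id = a ∨ I.sum id + 1 = a := by
  simp only [spanWithOne, mem_union, mem_image, mem_powerset]
  grind

theorem card_spanWithOne {A : Finset F} (hA : AvoidsZeroOne A) :
    #(spanWithOne A) = 2 ^ (#A + 1) := by
  have hdisj : Disjoint (A.powerset.image (fun I => I.sum id))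
      (A.powerset.image (fun I => I.sum id + 1)) := by
    simp only [disjoint_left, mem_image, mem_powerset]
    rintro _ ⟨I, hI, rfl⟩ ⟨J, hJ, hJI⟩
    exact hA.sum_ne_sum_add_one hI hJ hJI.symm
  rw [spanWithOne, card_union_of_disjoint hdisj, card_image_of_injOn hA.sum_injOn,
    card_image_of_injOn fun I hI J hJ h => hA.sum_injOn hI hJ (add_right_cancel h), card_powerset,
    pow_succ, mul_two]

theorem avoidsZeroOne_insert_iff {A : Finset F} {a : F} (ha : a ∉ A) :
    AvoidsZeroOne (insert a A) ↔ AvoidsZeroOne A ∧ a ∉ spanWithOne A := by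
  refine ⟨fun h => ⟨h.mono (subset_insert a A), fun hspan => ?_⟩,
    fun ⟨hA, hspan⟩ I hI hne => ?_⟩
  · obtain ⟨I, hI, hIa⟩ := mem_spanWithOne.1 hspan
    have hsum : (insert a I).sum id = a + I.sum id := sum_insert (fun h => ha (hI h))
    have := h _ (insert_subset_insert a hI) (insert_nonempty a I)
    rcases hIa with rfl | rfl
    · exact this.1 (by rw [hsum, CharTwo.add_self_eq_zero])
    · exact this.2 (by rw [hsum, add_right_comm, CharTwo.add_self_eq_zero, zero_add])
  by_cases haI : a ∈ I
  · have hsum : I.sum id = a + (I.erase a).sum id := (add_sum_erase I id haI).symm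
    have hJ : I.erase a ⊆ A := subset_insert_iff.1 hI
    refine ⟨fun h0 => hspan (mem_spanWithOne.2 ⟨_, hJ, Or.inl ?_⟩),
      fun h1 => hspan (mem_spanWithOne.2 ⟨_, hJ, Or.inr ?_⟩)⟩
    · rw [hsum, CharTwo.add_eq_zero] at h0
      exact h0.symm
    · rw [hsum, CharTwo.add_eq_iff_eq_add] at h1
      rw [add_comm]
      exact h1.symm
  · exact hA I ((subset_insert_iff_of_notMem haI).1 hI) hne

end SubsetSums

theorem card_filter_subset_eq_card_sdiff {α : Type*} [DecidableEq α] {s : Finset (Finset α)}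
    {B D : Finset α} (hs : ∀ A ∈ s, #A + 1 = #B ∧ D ⊆ A)
    (herase : ∀ a ∈ B \ D, B.erase a ∈ s) : #{A ∈ s | A ⊆ B} = #(B \ D) := by
  suffices h : {A ∈ s | A ⊆ B} = (B \ D).image B.erase by
    rw [h, card_image_of_injOn ((erase_injOn B).mono sdiff_subset)]
  ext A
  simp only [mem_filter, mem_image, mem_sdiff]
  constructor
  · rintro ⟨hA, hAB⟩
    obtain ⟨a, haA, rfl⟩ := exists_eq_insert_iff.2 ⟨hAB, (hs A hA).1⟩
    exact ⟨a, ⟨mem_insert_self a A, fun haD => haA ((hs _ hA).2 haD)⟩, erase_insert haA⟩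
  · rintro ⟨a, ha, rfl⟩
    exact ⟨herase a (mem_sdiff.2 ha), erase_subset a B⟩

section Counting

variable {F : Type*} [CommRing F] [Fintype F]

def avoidingSupersets (D : Finset F) (k : ℕ) : Finset (Finset F) :=
  {A | AvoidsZeroOne A ∧ #A = k ∧ D ⊆ A}

theorem mem_avoidingSupersets {D A : Finset F} {k : ℕ} :
    A ∈ avoidingSupersets D k ↔ AvoidsZeroOne A ∧ #A = k ∧ D ⊆ A := by
  simp [avoidingSupersets]

theorem avoidingSupersets_card_self {D : Finset F} (hD : AvoidsZeroOne D) :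
    avoidingSupersets D #D = {D} := by
  ext A
  rw [mem_avoidingSupersets, mem_singleton]
  constructor
  · rintro ⟨-, hcard, hDA⟩
    exact (eq_of_subset_of_card_le hDA hcard.le).symm
  · rintro rfl
    exact ⟨hD, rfl, subset_rfl⟩

variable [CharP F 2]

theorem card_avoidingSupersets_filter_superset {D A : Finset F} {k : ℕ}
    (hmem : A ∈ avoidingSupersets D k) :
    #{B ∈ avoidingSupersets D (k + 1) | A ⊆ B} = Fintype.card F - 2 ^ (k + 1) := by
  obtain ⟨hA, rfl, hDA⟩ := mem_avoidingSupersets.1 hmem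
  have hnotMem : ∀ a ∈ (spanWithOne A)ᶜ, a ∉ A := fun a ha haA => mem_compl.1 ha
    (mem_spanWithOne.2 ⟨{a}, singleton_subset_iff.2 haA, Or.inl (sum_singleton id a)⟩)
  suffices h : {B ∈ avoidingSupersets D (#A + 1) | A ⊆ B} =
      (spanWithOne A)ᶜ.image (insert · A) by
    rw [h, card_image_of_injOn fun a ha b hb => (insert_inj (hnotMem a ha)).1, card_compl,
      card_spanWithOne hA]
  ext B
  simp only [mem_filter, mem_avoidingSupersets, mem_image, mem_compl]
  constructor
  · rintro ⟨⟨hB, hcard, -⟩, hAB⟩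
    obtain ⟨a, haA, rfl⟩ := exists_eq_insert_iff.2 ⟨hAB, hcard.symm⟩
    exact ⟨a, ((avoidsZeroOne_insert_iff haA).1 hB).2, rfl⟩
  · rintro ⟨a, ha, rfl⟩
    have haA := hnotMem a (mem_compl.2 ha)
    exact ⟨⟨(avoidsZeroOne_insert_iff haA).2 ⟨hA, ha⟩, card_insert_of_notMem haA,
      hDA.trans (subset_insert a A)⟩, subset_insert a A⟩

theorem card_avoidingSupersets_succ (D : Finset F) (k : ℕ) :
    #(avoidingSupersets D (k + 1)) * (k + 1 - #D) =
      #(avoidingSupersets D k) * (Fintype.card F - 2 ^ (k + 1)) :=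
  card_mul_eq_card_mul (fun B A => A ⊆ B)
    (fun B hB => by
      obtain ⟨hB, hcard, hDB⟩ := mem_avoidingSupersets.1 hB
      rw [bipartiteAbove, card_filter_subset_eq_card_sdiff (D := D), card_sdiff_of_subset hDB,
        hcard]
      · exact fun A hA => by
          obtain ⟨-, hA, hDA⟩ := mem_avoidingSupersets.1 hA
          exact ⟨by rw [hA, hcard], hDA⟩
      · intro a ha
        obtain ⟨haB, haD⟩ := mem_sdiff.1 ha
        refine mem_avoidingSupersets.2 ⟨hB.mono (erase_subset a B), ?_, ?_⟩
        · rw [card_erase_of_mem haB, hcard, Nat.add_sub_cancel]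
        · exact fun d hd => mem_erase.2 ⟨fun h => haD (h ▸ hd), hDB hd⟩)
    (fun A hA => by exact card_avoidingSupersets_filter_superset hA)

theorem factorial_mul_card_avoidingSupersets {D : Finset F} (hD : AvoidsZeroOne D) {j : ℕ}
    (hj : #D ≤ j) :
    (j - #D).factorial * #(avoidingSupersets D j) =
      ∏ i ∈ Ico #D j, (Fintype.card F - 2 ^ (i + 1)) := by
  induction j, hj using Nat.le_induction with
  | base => simp [avoidingSupersets_card_self hD]
  | succ j hj ih =>
    rw [Nat.sub_add_comm hj, Nat.factorial_succ, prod_Ico_succ_top hj, ← ih,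
      mul_assoc (j - #D).factorial, ← card_avoidingSupersets_succ, Nat.sub_add_comm hj]
    ring

end Counting

section Blocks

variable {F : Type*} [CommRing F]

def IsBlock (B : Finset F) : Prop :=
  (B : Set F) ⊆ {x | x ≠ 0 ∧ x ≠ 1} ∧ B.sum id = 1 ∧
    ∀ I ⊆ B, I.Nonempty → I ≠ B → I.sum id ≠ 1

def blocksContaining [Fintype F] (D : Finset F) (k : ℕ) : Finset (Finset F) :=
  {B | IsBlock B ∧ #B = k ∧ D ⊆ B}

theorem mem_blocksContaining [Fintype F] {D B : Finset F} {k : ℕ} :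
    B ∈ blocksContaining D k ↔ IsBlock B ∧ #B = k ∧ D ⊆ B := by
  simp [blocksContaining]

variable [CharP F 2]

theorem IsBlock.avoidsZeroOne_erase {B : Finset F} (hB : IsBlock B) {a : F} (ha : a ∈ B) :
    AvoidsZeroOne (B.erase a) := by
  intro I hI hne
  have hIB : I ⊆ B := hI.trans (erase_subset a B)
  have haI : a ∉ I := fun h => notMem_erase a B (hI h)
  refine ⟨fun h0 => ?_, hB.2.2 I hIB hne (fun h => haI (h ▸ ha))⟩
  obtain ⟨e, he⟩ := hne
  refine hB.2.2 (B \ I) sdiff_subset ⟨a, mem_sdiff.2 ⟨ha, haI⟩⟩ (fun h => ?_) ?_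
  · exact (mem_sdiff.1 (h.symm ▸ hIB he)).2 he
  · rw [sum_sdiff_eq_add hIB, hB.2.1, h0, add_zero]

theorem AvoidsZeroOne.one_add_sum_notMem {A : Finset F} (hA : AvoidsZeroOne A) :
    1 + A.sum id ∉ A := by
  intro hmem
  have h := add_sum_erase A id hmem
  rw [id, add_comm 1, add_assoc, add_eq_left, CharTwo.add_eq_zero] at h
  exact hA.sum_ne_one (erase_subset _ A) h.symm

theorem AvoidsZeroOne.isBlock_insert {A : Finset F} (hA : AvoidsZeroOne A) (hne : A.Nonempty) :
    IsBlock (insert (1 + A.sum id) A) := by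
  have hb := hA.one_add_sum_notMem
  refine ⟨fun x hx => ?_, ?_, fun I hI hIne hIB => ?_⟩
  · rcases mem_insert.1 hx with rfl | hxA
    · have hsum := hA A subset_rfl hne
      exact ⟨fun h => hsum.2 (CharTwo.add_eq_zero.1 h).symm, fun h => hsum.1 (add_eq_left.1 h)⟩
    · exact avoidsZeroOne_singleton.1 (hA.mono (singleton_subset_iff.2 hxA))
  · rw [sum_insert hb, id, add_assoc, CharTwo.add_self_eq_zero, add_zero]
  by_cases hbI : 1 + A.sum id ∈ I
  · -- `J := I.erase (1 + ΣA)` is a proper subset of `A` and `ΣI = 1 + Σ(A \ J)`.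
    have hJ : I.erase (1 + A.sum id) ⊆ A := subset_insert_iff.1 hI
    have hJA : ¬A ⊆ I.erase (1 + A.sum id) := fun h =>
      hIB ((insert_erase hbI).symm.trans (congrArg _ (h.antisymm hJ).symm))
    intro h1
    refine (hA _ sdiff_subset (sdiff_nonempty.2 hJA)).1 ?_
    rw [← add_sum_erase I id hbI, id, add_assoc, add_eq_left] at h1
    rwa [sum_sdiff_eq_add hJ]
  · exact hA.sum_ne_one ((subset_insert_iff_of_notMem hbI).1 hI)

variable [Fintype F]

theorem filter_blocksContaining_superset {D A : Finset F} {k : ℕ} (hk : k ≠ 0)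
    (hmem : A ∈ avoidingSupersets D k) :
    {B ∈ blocksContaining D (k + 1) | A ⊆ B} = {insert (1 + A.sum id) A} := by
  obtain ⟨hA, rfl, hDA⟩ := mem_avoidingSupersets.1 hmem
  ext B
  simp only [mem_filter, mem_blocksContaining, mem_singleton]
  constructor
  · rintro ⟨⟨hB, hcard, -⟩, hAB⟩
    obtain ⟨a, haA, rfl⟩ := exists_eq_insert_iff.2 ⟨hAB, hcard.symm⟩
    have hsum := hB.2.1
    rw [sum_insert haA, id, CharTwo.add_eq_iff_eq_add] at hsum
    rw [hsum]
  · rintro rfl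
    have hb := hA.one_add_sum_notMem
    exact ⟨⟨hA.isBlock_insert (card_ne_zero.1 hk), card_insert_of_notMem hb,
      hDA.trans (subset_insert _ A)⟩, subset_insert _ A⟩

theorem card_blocksContaining_succ (D : Finset F) {k : ℕ} (hk : k ≠ 0) :
    #(blocksContaining D (k + 1)) * (k + 1 - #D) = #(avoidingSupersets D k) :=
  (card_mul_eq_card_mul (fun B A => A ⊆ B)
    (fun B hB => by
      obtain ⟨hB, hcard, hDB⟩ := mem_blocksContaining.1 hB
      rw [bipartiteAbove, card_filter_subset_eq_card_sdiff (D := D), card_sdiff_of_subset hDB,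
        hcard]
      · exact fun A hA => by
          obtain ⟨-, hA, hDA⟩ := mem_avoidingSupersets.1 hA
          exact ⟨by rw [hA, hcard], hDA⟩
      · intro a ha
        obtain ⟨haB, haD⟩ := mem_sdiff.1 ha
        refine mem_avoidingSupersets.2 ⟨hB.avoidsZeroOne_erase haB, ?_, ?_⟩
        · rw [card_erase_of_mem haB, hcard, Nat.add_sub_cancel]
        · exact fun d hd => mem_erase.2 ⟨fun h => haD (h ▸ hd), hDB hd⟩)
    (fun A hA => by
      rw [bipartiteBelow, filter_blocksContaining_superset hk hA, card_singleton])).trans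
    (mul_one _)

theorem factorial_mul_card_blocksContaining {D : Finset F} (hD : AvoidsZeroOne D) {k : ℕ}
    (hk : k ≠ 0) (hDk : #D ≤ k) :
    (k + 1 - #D).factorial * #(blocksContaining D (k + 1)) =
      ∏ i ∈ Ico #D k, (Fintype.card F - 2 ^ (i + 1)) := by
  rw [← factorial_mul_card_avoidingSupersets hD hDk, ← card_blocksContaining_succ D hk,
    Nat.sub_add_comm hDk, Nat.factorial_succ]
  ring

end Blocks

theorem coe_blocksContaining_empty (m k : ℕ) [Fintype (GaloisField 2 m)] :
    ↑(blocksContaining (∅ : Finset (GaloisField 2 m)) k) = designW m k := by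
  ext B
  simp only [mem_coe, mem_blocksContaining, IsBlock, designW, designX, empty_subset,
    Set.mem_ofPred_eq, and_true]
  tauto

theorem coe_blocksContaining_singleton (m k : ℕ) [Fintype (GaloisField 2 m)]
    (x : GaloisField 2 m) :
    ↑(blocksContaining {x} k) = {B ∈ designW m k | x ∈ B} := by
  rw [← coe_blocksContaining_empty]
  ext B
  simp only [mem_coe, mem_blocksContaining, empty_subset, singleton_subset_iff,
    Set.mem_ofPred_eq]
  tauto

/-- For `m ≥ 6`, every `x ∈ X` lies in exactly `r_6` blocks of `W_6`, and the total
number of blocks is `|W_6| = b_6`. -/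
theorem repetition_and_block_numbers_W6 (m : ℕ) (hm : 6 ≤ m) :
    (∀ x ∈ designX m, {B ∈ designW m 6 | x ∈ B}.ncard = (2 ^ m - 4) * (2 ^ m - 8) * (2 ^ m - 16) * (2 ^ m - 32) / Nat.factorial 5) ∧
    (designW m 6).ncard = (2 ^ m - 2) * (2 ^ m - 4) * (2 ^ m - 8) * (2 ^ m - 16) * (2 ^ m - 32) / Nat.factorial 6 := by
  have : Fintype (GaloisField 2 m) := Fintype.ofFinite _
  have hq : Fintype.card (GaloisField 2 m) = 2 ^ m := by
    rw [← Nat.card_eq_fintype_card, GaloisField.card 2 m (by omega)]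
  refine ⟨fun x hx => ?_, ?_⟩
  · have h := factorial_mul_card_blocksContaining (avoidsZeroOne_singleton.2 hx) (k := 5)
      (by norm_num) (by simp)
    norm_num [hq, prod_Ico_eq_prod_range, prod_range_succ] at h
    rw [← coe_blocksContaining_singleton, Set.ncard_coe_finset, ← h]
    norm_num [Nat.factorial]
  · have h := factorial_mul_card_blocksContaining
      (avoidsZeroOne_empty (F := GaloisField 2 m)) (k := 5) (by norm_num) (by simp)
    norm_num [hq, prod_range_succ] at h
    rw [← coe_blocksContaining_empty, Set.ncard_coe_finset, ← h]
    norm_num [Nat.factorial]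
end
end

section
/- Suppose m ≥ 7. For every pair of distinct elements u, v ∈ X with u + v ≠ 1, the number of blocks B ∈ W_7 with u ∈ B and v ∈ B equals λ_7 = (2^m − 8)(2^m − 16)(2^m − 32)(2^m − 64)/5!; that is, the triple (X, W_2, W_7) is a group divisible design GDD(2^m − 2, 2, 7) with balance parameter λ_7 = (2^m − 8)(2^m − 16)(2^m − 32)(2^m − 64)/120. -/
/-!
For `k ≥ 2`, a `k`-set `B ⊆ GF(2^m)` with sum `1` lies in `W_k` exactly when it is linearly
independent over `GF(2)`: if `I ⊆ B` sums to `1`, then `B \ I` sums to `0`, and conversely. Now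
let `B` be such a block through `u` and `v`, and list its other five elements as `f₁, …, f₅` in
any of the `5!` orders. Since `f₅ - 1 = -(u + v + f₁ + ⋯ + f₄)` lies in the span of
`u, v, f₁, …, f₄`, exchanging `f₅` for `1` keeps the family independent, so
`(1, u, v, f₁, …, f₄)` is linearly independent, and `f₅ = 1 - (u + v + f₁ + ⋯ + f₄)` is
determined by the others. Conversely, every independent extension `(1, u, v, f₁, …, f₄)`
completes to a block in this way. There are `(2^m - 2^3)(2^m - 2^4)(2^m - 2^5)(2^m - 2^6)` such
extensions, because the `i`-th new vector must avoid a span of size `2^(2+i)`. None of this needs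
characteristic `2` except the first step.
-/

open scoped Classical

noncomputable section

open Finset Submodule

theorem Fin.range_append {α : Type*} {m n : ℕ} (xs : Fin m → α) (ys : Fin n → α) :
    Set.range (Fin.append xs ys) = Set.range xs ∪ Set.range ys := by
  rw [← Set.Sum.elim_range, ← Fin.append_comp_sumElim]
  exact ((finSumFinEquiv (m := m) (n := n)).surjective.range_comp _).symm

theorem card_filter_injective_forall_mem {α : Type*} [Fintype α] (s : Finset α) (n : ℕ) :
    #{f : Fin n → α | Function.Injective f ∧ ∀ i, f i ∈ s} = (#s).descFactorial n := by
  rw [← Fintype.card_subtype]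
  refine (Fintype.card_congr (β := Fin n ↪ s) ?_).trans ?_
  · exact
    { toFun f := ⟨fun i => ⟨f.1 i, f.2.2 i⟩, fun i j h => f.2.1 (congrArg Subtype.val h)⟩
      invFun φ := ⟨fun i => φ i, Subtype.val_injective.comp φ.injective, fun i => (φ i).2⟩
      left_inv f := rfl
      right_inv φ := rfl }
  · rw [Fintype.card_embedding_eq, Fintype.card_coe, Fintype.card_fin]

theorem forall_sum_ne_iff_forall_sum_ne_zero {G : Type*} [AddCommGroup G] {B : Finset G} {e : G}
    (hB : ∑ x ∈ B, x = e) (he : e ≠ 0) :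
    (∀ I ⊆ B, I.Nonempty → I ≠ B → ∑ x ∈ I, x ≠ e) ↔ ∀ I ⊆ B, I.Nonempty → ∑ x ∈ I, x ≠ 0 := by
  have hcompl : ∀ I ⊆ B, ∑ x ∈ B \ I, x = e - ∑ x ∈ I, x := fun I hI => by
    rw [sum_sdiff_eq_sub hI, hB]
  have hne : ∀ I ⊆ B, (B \ I).Nonempty ↔ I ≠ B := fun I hI => by
    rw [sdiff_nonempty, Ne, Subset.antisymm_iff, and_iff_right hI]
  have hproper : ∀ I ⊆ B, B \ I ≠ B ↔ I.Nonempty := fun I hI => by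
    refine ⟨fun h => ?_, fun ⟨x, hx⟩ h => (mem_sdiff.mp (h ▸ hI hx)).2 hx⟩
    by_contra hI0
    rw [not_nonempty_iff_eq_empty] at hI0
    exact h (by rw [hI0, sdiff_empty])
  constructor
  · intro h I hI hI0 hsum
    by_cases hIB : I = B
    · exact he (hB ▸ hIB ▸ hsum)
    · exact h (B \ I) sdiff_subset ((hne I hI).mpr hIB) ((hproper I hI).mpr hI0)
        (by rw [hcompl I hI, hsum, sub_zero])
  · intro h I hI hI0 hIB hsum
    exact h (B \ I) sdiff_subset ((hne I hI).mpr hIB) (by rw [hcompl I hI, hsum, sub_self])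

section LinearIndependentExtension

variable {F V : Type*} [Field F] [AddCommGroup V] [Module F V]

theorem linearIndependent_append_snoc_iff {m n : ℕ} {w : Fin m → V} {f : Fin n → V} {x : V} :
    LinearIndependent F (Fin.append w (Fin.snoc f x)) ↔
      LinearIndependent F (Fin.append w f) ∧ x ∉ span F (Set.range (Fin.append w f)) := by
  rw [Fin.append_snoc, linearIndependent_finSnoc]

def linearIndependentAppendSnocEquiv {m n : ℕ} (w : Fin m → V) :
    {g : Fin (n + 1) → V // LinearIndependent F (Fin.append w g)} ≃
      Σ f : {f : Fin n → V // LinearIndependent F (Fin.append w f)},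
        {x // x ∉ span F (Set.range (Fin.append w f.1))} where
  toFun g :=
    have hg := linearIndependent_append_snoc_iff.mp (by rw [Fin.snoc_init_self]; exact g.2)
    ⟨⟨Fin.init g.1, hg.1⟩, ⟨g.1 (Fin.last n), hg.2⟩⟩
  invFun p := ⟨Fin.snoc p.1.1 p.2.1, linearIndependent_append_snoc_iff.mpr ⟨p.1.2, p.2.2⟩⟩
  left_inv g := by simp
  right_inv p := Sigma.subtype_ext (Subtype.ext (Fin.init_snoc (α := fun _ => V) _ _))
    (Fin.snoc_last (α := fun _ => V) _ _)

variable [Fintype F] [Fintype V]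

theorem card_notMem_span_of_linearIndependent {k : ℕ} {g : Fin k → V}
    (hg : LinearIndependent F g) :
    #{x | x ∉ span F (Set.range g)} = Fintype.card V - Fintype.card F ^ k := by
  rw [filter_not, card_sdiff_of_subset (filter_subset _ _), card_univ, ← Fintype.card_subtype,
    Module.card_eq_pow_finrank (K := F) (V := span F (Set.range g)), finrank_span_eq_card hg,
    Fintype.card_fin]

theorem card_linearIndependent_append {m : ℕ} {w : Fin m → V} (hw : LinearIndependent F w)
    (n : ℕ) : #{f : Fin n → V | LinearIndependent F (Fin.append w f)} =
      ∏ i ∈ range n, (Fintype.card V - Fintype.card F ^ (m + i)) := by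
  induction n with
  | zero =>
    rw [prod_range_zero, filter_true_of_mem fun f _ => ?_, card_univ, Fintype.card_unique]
    rw [Subsingleton.elim f Fin.elim0, Fin.append_elim0]
    exact hw.comp _ (Fin.cast_injective _)
  | succ n ih =>
    rw [prod_range_succ, ← ih, ← Fintype.card_subtype,
      Fintype.card_congr (linearIndependentAppendSnocEquiv w), Fintype.card_sigma]
    simp only [Fintype.card_subtype]
    rw [sum_congr rfl fun f _ => card_notMem_span_of_linearIndependent f.2, sum_const, card_univ,
      Fintype.card_subtype, smul_eq_mul]

end LinearIndependentExtension

section Stem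

variable {V : Type*}

def blockStem (u v : V) {n : ℕ} (f : Fin n → V) : Finset V := insert u (insert v (univ.image f))

theorem range_append_eq_insert_blockStem (e u v : V) {n : ℕ} (f : Fin n → V) :
    Set.range (Fin.append ![e, u, v] f) = ↑(insert e (blockStem u v f)) := by
  ext x
  simp only [Fin.range_append, Matrix.range_cons, Matrix.range_empty, blockStem, coe_insert,
    coe_image, coe_univ, Set.image_univ, Set.mem_union, Set.mem_insert_iff, Set.mem_singleton_iff]
  tauto

theorem card_blockStem {u v : V} {n : ℕ} {f : Fin n → V} (huv : u ≠ v) (hf : Function.Injective f)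
    (hfuv : ∀ i, f i ≠ u ∧ f i ≠ v) : #(blockStem u v f) = n + 2 := by
  rw [blockStem, card_insert_of_notMem, card_insert_of_notMem, card_image_of_injective _ hf,
    card_univ, Fintype.card_fin]
  · simpa using fun i => (hfuv i).2
  · simpa [huv] using fun i => (hfuv i).1

end Stem

section Blocks

variable {F V : Type*} [Field F] [AddCommGroup V] [Module F V]

theorem linearIndepOn_id_insert_congr {s : Set V} {y z : V} (hy : y ∉ s) (hz : z ∉ s)
    (h : y - z ∈ span F s) :
    LinearIndepOn F id (insert y s) ↔ LinearIndepOn F id (insert z s) := by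
  rw [linearIndepOn_id_insert hy, linearIndepOn_id_insert hz]
  have : y ∈ span F s ↔ z ∈ span F s :=
    ⟨fun hy' => by simpa using sub_mem hy' h, fun hz' => by simpa using add_mem h hz'⟩
  rw [this]

theorem sum_ne_zero_of_linearIndepOn {s : Finset V} (hs : LinearIndepOn F id (s : Set V))
    (hne : s.Nonempty) : ∑ x ∈ s, x ≠ 0 := by
  intro h
  obtain ⟨x, hx⟩ := hne
  exact one_ne_zero (linearIndepOn_iff'.mp hs s 1 subset_rfl (by simpa using h) x hx)

theorem notMem_of_linearIndepOn_of_sum_eq {B : Finset V} {e : V}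
    (hB : LinearIndepOn F id (B : Set V)) (hcard : 2 ≤ #B) (hsum : ∑ x ∈ B, x = e) : e ∉ B := by
  intro he
  refine sum_ne_zero_of_linearIndepOn (hB.mono (coe_subset.mpr (erase_subset e B)))
    (by rw [← card_pos, card_erase_of_mem he]; omega) ?_
  rw [← add_right_cancel_iff (a := e), sum_erase_add _ _ he, hsum, zero_add]

variable {e u v : V} {n : ℕ}

theorem LinearIndependent.vec_three_ne (hw : LinearIndependent F ![e, u, v]) :
    e ≠ u ∧ e ≠ v ∧ u ≠ v :=
  ⟨by simpa using hw.injective.ne (show (0 : Fin 3) ≠ 1 by decide),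
    by simpa using hw.injective.ne (show (0 : Fin 3) ≠ 2 by decide),
    by simpa using hw.injective.ne (show (1 : Fin 3) ≠ 2 by decide)⟩

theorem linearIndependent_append_iff_blockStem (hw : LinearIndependent F ![e, u, v])
    (f : Fin n → V) :
    LinearIndependent F (Fin.append ![e, u, v] f) ↔
      Function.Injective f ∧ (∀ i, f i ≠ e ∧ f i ≠ u ∧ f i ≠ v) ∧
        LinearIndepOn F id (insert e (blockStem u v f) : Set V) := by
  have hinj : Function.Injective (Fin.append ![e, u, v] f) ↔
      Function.Injective f ∧ ∀ i, f i ≠ e ∧ f i ≠ u ∧ f i ≠ v := by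
    simp [Fin.append_injective_iff, hw.injective, Fin.forall_fin_succ, forall_and, eq_comm]
  rw [← coe_insert, ← range_append_eq_insert_blockStem, ← and_assoc, ← hinj]
  exact ⟨fun h => ⟨h.injective, (linearIndepOn_id_range_iff h.injective).mpr h⟩,
    fun h => (linearIndepOn_id_range_iff h.1).mp h.2⟩

def completeBlock (e u v : V) {n : ℕ} (f : Fin n → V) : Finset V :=
  insert (e - ∑ x ∈ blockStem u v f, x) (blockStem u v f)

theorem sum_mem_span_self (s : Finset V) : ∑ x ∈ s, x ∈ span F (s : Set V) :=
  sum_mem fun _ hx => subset_span hx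

variable [Fintype V]

variable (F) in
def blocksThrough (e u v : V) (k : ℕ) : Finset (Finset V) :=
  {B | u ∈ B ∧ v ∈ B ∧ #B = k ∧ ∑ x ∈ B, x = e ∧ LinearIndepOn F id (B : Set V)}

theorem completeBlock_mem_blocksThrough (hw : LinearIndependent F ![e, u, v]) {f : Fin n → V}
    (hf : LinearIndependent F (Fin.append ![e, u, v] f)) :
    completeBlock e u v f ∈ blocksThrough F e u v (n + 3) := by
  obtain ⟨hinj, hfe, hindep⟩ := (linearIndependent_append_iff_blockStem hw f).mp hf
  obtain ⟨heu, hev, huv⟩ := hw.vec_three_ne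
  set S := blockStem u v f
  have heS : e ∉ S := by
    simpa [S, blockStem, heu, hev] using fun i => (hfe i).1
  have hcard : #S = n + 2 := card_blockStem huv hinj fun i => (hfe i).2
  rw [linearIndepOn_id_insert (mem_coe.not.mpr heS)] at hindep
  have hxS : e - ∑ x ∈ S, x ∉ S := fun hx =>
    hindep.2 (by simpa using add_mem (subset_span hx) (sum_mem_span_self (F := F) S))
  refine mem_filter.mpr ⟨mem_univ _, mem_insert_of_mem (mem_insert_self _ _),
    mem_insert_of_mem (mem_insert_of_mem (mem_insert_self _ _)), ?_, ?_, ?_⟩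
  · rw [completeBlock, card_insert_of_notMem hxS, hcard]
  · rw [completeBlock, sum_insert hxS, sub_add_cancel]
  · rw [completeBlock, coe_insert, linearIndepOn_id_insert_congr (mem_coe.not.mpr hxS)
      (mem_coe.not.mpr heS) (by simpa using neg_mem (sum_mem_span_self (F := F) S)),
      linearIndepOn_id_insert (mem_coe.not.mpr heS)]
    exact hindep

theorem linearIndependent_append_and_completeBlock_eq_iff (hw : LinearIndependent F ![e, u, v])
    {B : Finset V} (hB : B ∈ blocksThrough F e u v (n + 3)) (f : Fin n → V) :
    LinearIndependent F (Fin.append ![e, u, v] f) ∧ completeBlock e u v f = B ↔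
      Function.Injective f ∧ ∀ i, f i ∈ B \ {u, v} := by
  obtain ⟨huB, hvB, hcardB, hsumB, hindB⟩ := (mem_filter.mp hB).2
  rw [linearIndependent_append_iff_blockStem hw]
  constructor
  · rintro ⟨⟨hinj, hfe, -⟩, rfl⟩
    refine ⟨hinj, fun i => mem_sdiff.mpr ⟨?_, by simpa using (hfe i).2⟩⟩
    exact mem_insert_of_mem (by simp [blockStem])
  · rintro ⟨hinj, hfB⟩
    set S := blockStem u v f
    have hSB : S ⊆ B := insert_subset huB (insert_subset hvB
      (image_subset_iff.mpr fun i _ => (mem_sdiff.mp (hfB i)).1))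
    have hcard : #S = n + 2 :=
      card_blockStem hw.vec_three_ne.2.2 hinj fun i => by simpa using (mem_sdiff.mp (hfB i)).2
    obtain ⟨x, hx⟩ : ∃ x, B \ S = {x} :=
      card_eq_one.mp (by rw [card_sdiff_of_subset hSB, hcardB, hcard]; omega)
    have hxS : x ∉ S := (mem_sdiff.mp (hx ▸ mem_singleton_self x)).2
    have hBx : B = insert x S := by rw [← sdiff_union_of_subset hSB, hx, insert_eq]
    have hx_eq : x = e - ∑ y ∈ S, y := by
      rw [hBx, sum_insert hxS] at hsumB
      exact eq_sub_of_add_eq hsumB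
    have heB : e ∉ B := notMem_of_linearIndepOn_of_sum_eq hindB (by omega) hsumB
    have heS : e ∉ S := fun h => heB (hSB h)
    refine ⟨⟨hinj, fun i => ?_, ?_⟩, by rw [completeBlock, ← hx_eq, hBx]⟩
    · have := mem_sdiff.mp (hfB i)
      exact ⟨fun h => heB (h ▸ this.1), by simpa using this.2⟩
    · rw [← linearIndepOn_id_insert_congr (mem_coe.not.mpr hxS) (mem_coe.not.mpr heS)
        (by simpa [hx_eq] using neg_mem (sum_mem_span_self (F := F) S)), ← coe_insert, ← hBx]
      exact hindB

theorem card_blocksThrough_mul_factorial [Fintype F] (hw : LinearIndependent F ![e, u, v])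
    (n : ℕ) : #(blocksThrough F e u v (n + 3)) * (n + 1).factorial =
      ∏ i ∈ range n, (Fintype.card V - Fintype.card F ^ (3 + i)) := by
  rw [← card_linearIndependent_append hw n, card_eq_sum_card_fiberwise
    fun f hf => completeBlock_mem_blocksThrough hw (mem_filter.mp hf).2, sum_const_nat]
  intro B hB
  obtain ⟨huB, hvB, hcardB, -⟩ := (mem_filter.mp hB).2
  rw [filter_filter,
    filter_congr fun f _ => linearIndependent_append_and_completeBlock_eq_iff hw hB f,
    card_filter_injective_forall_mem, card_sdiff_of_subset (insert_subset huB
      (singleton_subset_iff.mpr hvB)), card_pair hw.vec_three_ne.2.2, hcardB, show n + 3 - 2 = n + 1 by omega]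
  simpa using Nat.factorial_mul_descFactorial (Nat.le_succ n)

end Blocks

theorem linearIndepOn_zmod_two_iff_forall_sum_ne_zero {V : Type*} [AddCommGroup V]
    [Module (ZMod 2) V] {s : Finset V} :
    LinearIndepOn (ZMod 2) id (s : Set V) ↔ ∀ I ⊆ s, I.Nonempty → ∑ x ∈ I, x ≠ 0 := by
  refine ⟨fun hs I hI => sum_ne_zero_of_linearIndepOn (hs.mono (coe_subset.mpr hI)), fun h => ?_⟩
  rw [linearIndepOn_iff']
  intro t g ht hg i hi
  by_contra hgi
  have h01 : ∀ a : ZMod 2, a ≠ 0 → a = 1 := by decide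
  refine h {x ∈ t | g x ≠ 0} (fun x hx => mem_coe.mp (ht (mem_filter.mp hx).1))
    ⟨i, mem_filter.mpr ⟨hi, hgi⟩⟩ ?_
  rw [sum_filter]
  refine (sum_congr rfl fun x _ => ?_).trans hg
  split_ifs with hx
  · rw [h01 _ hx, one_smul, id]
  · rw [not_not.mp hx, zero_smul]

theorem mem_designW_iff {m k : ℕ} (hk : 2 ≤ k) {B : Finset (GaloisField 2 m)} :
    B ∈ designW m k ↔
      #B = k ∧ ∑ x ∈ B, x = 1 ∧ LinearIndepOn (ZMod 2) id (B : Set (GaloisField 2 m)) := by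
  constructor
  · rintro ⟨-, hcard, hsum, hmin⟩
    exact ⟨hcard, hsum, linearIndepOn_zmod_two_iff_forall_sum_ne_zero.mpr
      ((forall_sum_ne_iff_forall_sum_ne_zero hsum one_ne_zero).mp hmin)⟩
  · rintro ⟨hcard, hsum, hind⟩
    refine ⟨fun x hx => ⟨fun h => hind.zero_notMem_image ⟨x, hx, h⟩, fun h => ?_⟩, hcard, hsum,
      (forall_sum_ne_iff_forall_sum_ne_zero hsum one_ne_zero).mpr
        (linearIndepOn_zmod_two_iff_forall_sum_ne_zero.mp hind)⟩
    exact notMem_of_linearIndepOn_of_sum_eq hind (hcard ▸ hk) hsum (h ▸ hx)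

theorem linearIndependent_one_of_mem_designX {m : ℕ} {u v : GaloisField 2 m}
    (hu : u ∈ designX m) (hv : v ∈ designX m) (huv : u ≠ v) (hsum : u + v ≠ 1) :
    LinearIndependent (ZMod 2) ![1, u, v] := by
  obtain ⟨hu0, hu1⟩ := hu
  obtain ⟨hv0, hv1⟩ := hv
  rw [Fintype.linearIndependent_iff]
  intro g hg i
  have h01 : ∀ a : ZMod 2, a = 0 ∨ a = 1 := by decide
  rcases h01 (g 0) with h0 | h0 <;> rcases h01 (g 1) with h1 | h1 <;>
    rcases h01 (g 2) with h2 | h2 <;> simp [Fin.sum_univ_three, h0, h1, h2] at hg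
  all_goals first | (fin_cases i <;> assumption) | grind

/-- For `m ≥ 7` and distinct `u, v ∈ X` with `u + v ≠ 1`, exactly `λ_7 = (2^m-8)(2^m-16)(2^m-32)(2^m-64)/5!`
blocks of `W_7` contain both `u` and `v`; that is, `(X, W_2, W_7)` is a
`GDD(2^m - 2, 2, 7)` with balance parameter `λ_7`. -/
theorem GDD_W7 (m : ℕ) (hm : 7 ≤ m) (u v : GaloisField 2 m)
    (hu : u ∈ designX m) (hv : v ∈ designX m) (huv : u ≠ v) (hsum : u + v ≠ 1) :
    {B ∈ designW m 7 | u ∈ B ∧ v ∈ B}.ncard = (2 ^ m - 8) * (2 ^ m - 16) * (2 ^ m - 32) * (2 ^ m - 64) / Nat.factorial 5 := by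
  have := Fintype.ofFinite (GaloisField 2 m)
  have hblocks : {B ∈ designW m 7 | u ∈ B ∧ v ∈ B} = ↑(blocksThrough (ZMod 2) 1 u v 7) := by
    ext B
    simp only [Set.mem_ofPred_eq, mem_designW_iff (by norm_num : 2 ≤ 7), blocksThrough, coe_filter,
      mem_univ, true_and]
    tauto
  have hcard : Fintype.card (GaloisField 2 m) = 2 ^ m := by
    rw [← Nat.card_eq_fintype_card, GaloisField.card 2 m (by omega)]
  rw [hblocks, Set.ncard_coe_finset]
  refine Nat.eq_div_of_mul_eq_left (Nat.factorial_pos 5).ne' ?_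
  rw [card_blocksThrough_mul_factorial
    (linearIndependent_one_of_mem_designX hu hv huv hsum) 4, hcard]
  simp [prod_range_succ]
end
end
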